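/- arXiv:2002.04912 — 7 statements merged into one kernel-verified Lean document; each statement's English description precedes it below -/
import Mathlib

section
/- Let p be a prime and let l, k be positive integers with l | k. Then, as maps on the algebraic closure of 𝔽_p: if k/l is even then S_l^k ∘ T_l^{2l} = S_k^{2k}, i.e. S_l^k(x + x^{p^l}) = x − x^{p^k} for all x; and if k/l is odd then S_l^k ∘ T_l^{2l} = T_k^{2k}, i.e. S_l^k(x + x^{p^l}) = x + x^{p^k} for all x. -/
open Finset

/-- `Tmap p u v x = Σ_{i=0}^{v/u - 1} x^{p^{u i}}` on the algebraic closure of `𝔽_p`. -/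
noncomputable def Tmap (p : ℕ) [Fact p.Prime] (u v : ℕ) (x : AlgebraicClosure (ZMod p)) :
    AlgebraicClosure (ZMod p) :=
  ∑ i ∈ Finset.range (v / u), x ^ p ^ (u * i)

/-- `Smap p u v x = Σ_{i=0}^{v/u - 1} (-1)^i x^{p^{u i}}` on the algebraic closure of `𝔽_p`. -/
noncomputable def Smap (p : ℕ) [Fact p.Prime] (u v : ℕ) (x : AlgebraicClosure (ZMod p)) :
    AlgebraicClosure (ZMod p) :=
  ∑ i ∈ Finset.range (v / u), (-1 : AlgebraicClosure (ZMod p)) ^ i * x ^ p ^ (u * i)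

/-- `Ffield p m` is the subfield `𝔽_{p^m} = {x : x^{p^m} = x}` of the algebraic closure of `𝔽_p`. -/
def Ffield (p : ℕ) [Fact p.Prime] (m : ℕ) : Set (AlgebraicClosure (ZMod p)) :=
  {x | x ^ p ^ m = x}

/-! Frobenius is additive, so `S_l^k(x + x^{p^l})` is the alternating sum of
`x^{p^{li}} + x^{p^{l(i+1)}}`, which telescopes to `x - (-1)^{k/l} x^{p^k}`. -/

theorem sum_range_neg_one_pow_mul_add_succ {R : Type*} [CommRing R] (f : ℕ → R) (m : ℕ) :
    ∑ i ∈ range m, (-1 : R) ^ i * (f i + f (i + 1)) = f 0 - (-1) ^ m * f m := by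
  have h := sum_range_sub' (fun i ↦ (-1 : R) ^ i * f i) m
  simp only [pow_zero, one_mul] at h
  rw [← h]
  refine sum_congr rfl fun i _ ↦ ?_
  ring

theorem add_pow_pow_char_pow_mul {R : Type*} [CommRing R] (p : ℕ) [Fact p.Prime] [CharP R p]
    (x : R) (l i : ℕ) :
    (x + x ^ p ^ l) ^ p ^ (l * i) = x ^ p ^ (l * i) + x ^ p ^ (l * (i + 1)) := by
  rw [add_pow_char_pow, ← pow_mul, ← pow_add, Nat.mul_succ, Nat.add_comm]

theorem Smap_self_add_pow (p : ℕ) [Fact p.Prime] {l k : ℕ} (hlk : l ∣ k)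
    (x : AlgebraicClosure (ZMod p)) :
    Smap p l k (x + x ^ p ^ l) = x - (-1) ^ (k / l) * x ^ p ^ k := by
  simp only [Smap, add_pow_pow_char_pow_mul]
  rw [sum_range_neg_one_pow_mul_add_succ (fun i ↦ x ^ p ^ (l * i)),
    Nat.mul_div_cancel' hlk, mul_zero, pow_zero, pow_one]

theorem stmt1_general (p : ℕ) [Fact p.Prime] (l k : ℕ) (hlk : l ∣ k) :
    (Even (k / l) → ∀ x : AlgebraicClosure (ZMod p),
      Smap p l k (x + x ^ p ^ l) = x - x ^ p ^ k) ∧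
    (Odd (k / l) → ∀ x : AlgebraicClosure (ZMod p),
      Smap p l k (x + x ^ p ^ l) = x + x ^ p ^ k) := by
  refine ⟨fun he x ↦ ?_, fun ho x ↦ ?_⟩
  · rw [Smap_self_add_pow p hlk, he.neg_one_pow, one_mul]
  · rw [Smap_self_add_pow p hlk, ho.neg_one_pow, neg_one_mul, sub_neg_eq_add]

theorem stmt1 (p : ℕ) [Fact p.Prime] (l k : ℕ) (hl : 0 < l) (hk : 0 < k) (hlk : l ∣ k) :
    (Even (k / l) → ∀ x : AlgebraicClosure (ZMod p),
      Smap p l k (x + x ^ p ^ l) = x - x ^ p ^ k) ∧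
    (Odd (k / l) → ∀ x : AlgebraicClosure (ZMod p),
      Smap p l k (x + x ^ p ^ l) = x + x ^ p ^ k) :=
  stmt1_general p l k hlk
end

section
/- Let p be a prime, let n, k be positive integers, and set d = gcd(n,k). Then T_k^{lcm(n,k)}(x) = T_d^n(x) for every x ∈ 𝔽_{p^n}. Moreover, if lcm(n,k)/k is even, then also S_k^{lcm(n,k)}(x) = S_d^n(x) for every x ∈ 𝔽_{p^n}. -/
open Finset

/-! For `x ∈ 𝔽_{p^n}` the exponent `p^a` in `x^{p^a}` only matters modulo `n`. Writing `n = d m` and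
`k = d e` with `e, m` coprime, the `i`-th term of `T_k^{lcm(n,k)}` is `x^{p^{d (e i mod m)}}`, and
`i ↦ e i mod m` permutes `{0, …, m-1}`, so the sum is a reordering of `T_d^n`. When `m` is even, `e` is
odd, so `e i mod m` has the parity of `i` and the signs of `S` are permuted along. -/

theorem pow_pow_eq_pow_pow_mod {M : Type*} [Monoid M] {x : M} {p n : ℕ} (hx : x ^ p ^ n = x)
    (a : ℕ) : x ^ p ^ a = x ^ p ^ (a % n) := by
  have periodic : ∀ q, x ^ p ^ (n * q) = x := by
    intro q
    induction q with
    | zero => simp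
    | succ q ih => rw [mul_add_one, pow_add, pow_mul, ih, hx]
  conv_lhs => rw [← Nat.div_add_mod a n, pow_add, pow_mul, periodic]

theorem Finset.sum_range_comp_mul_mod {M : Type*} [AddCommMonoid M] {e m : ℕ}
    (he : e.Coprime m) (f : ℕ → M) : ∑ i ∈ range m, f (e * i % m) = ∑ i ∈ range m, f i := by
  have injOn : Set.InjOn (fun i => e * i % m) (range m) := by
    intro i hi j hj hij
    exact (Nat.ModEq.cancel_left_of_coprime (Nat.coprime_comm.mp he) hij).eq_of_lt_of_lt
      (mem_range.mp hi) (mem_range.mp hj)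
  have image_eq : (range m).image (fun i => e * i % m) = range m := by
    refine eq_of_subset_of_card_le (fun j hj => ?_) (card_image_of_injOn injOn).ge
    obtain ⟨i, hi, rfl⟩ := mem_image.mp hj
    exact mem_range.mpr (Nat.mod_lt _ (Nat.zero_lt_of_lt (mem_range.mp hi)))
  rw [← sum_image injOn, image_eq]

theorem neg_one_pow_mul_mod {R : Type*} [Ring R] {e m : ℕ} (he : Odd e) (hm : Even m) (i : ℕ) :
    (-1 : R) ^ (e * i % m) = (-1) ^ i := by
  rw [neg_one_pow_eq_pow_mod_two, Nat.mod_mod_of_dvd _ hm.two_dvd, Nat.mul_mod,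
    Nat.odd_iff.mp he, one_mul, Nat.mod_mod, ← neg_one_pow_eq_pow_mod_two]

theorem Nat.lcm_div_right_eq_div_gcd {n k : ℕ} (hk : 0 < k) :
    Nat.lcm n k / k = n / Nat.gcd n k := by
  rw [Nat.lcm, ← Nat.div_mul_right_comm (Nat.gcd_dvd_left n k), Nat.mul_div_cancel _ hk]

theorem stmt3_general (p : ℕ) [Fact p.Prime] (n k : ℕ) (hk : 0 < k)
    (d : ℕ) (hd : d = Nat.gcd n k) :
    (∀ x ∈ Ffield p n, Tmap p k (Nat.lcm n k) x = Tmap p d n x) ∧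
    (Even (Nat.lcm n k / k) → ∀ x ∈ Ffield p n,
      Smap p k (Nat.lcm n k) x = Smap p d n x) := by
  have hcop : (n / d).Coprime (k / d) := by
    subst hd; exact Nat.coprime_div_gcd_div_gcd (Nat.gcd_pos_of_pos_right n hk)
  have hlcm : Nat.lcm n k / k = n / d := hd ▸ Nat.lcm_div_right_eq_div_gcd hk
  have frobenius : ∀ x ∈ Ffield p n, ∀ i,
      x ^ p ^ (k * i) = x ^ p ^ (d * (k / d * i % (n / d))) := by
    intro x hx i
    rw [pow_pow_eq_pow_pow_mod hx, ← Nat.mul_mod_mul_left, ← Nat.mul_assoc,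
      Nat.mul_div_cancel' (hd ▸ Nat.gcd_dvd_right n k),
      Nat.mul_div_cancel' (hd ▸ Nat.gcd_dvd_left n k)]
  refine ⟨fun x hx => ?_, fun heven x hx => ?_⟩
  · simp only [Tmap, hlcm, frobenius x hx]
    exact sum_range_comp_mul_mod hcop.symm fun j => x ^ p ^ (d * j)
  · rw [hlcm] at heven
    have hodd : Odd (k / d) := (Nat.Coprime.coprime_dvd_left heven.two_dvd hcop).odd_of_left
    simp only [Smap, hlcm, frobenius x hx]
    rw [← sum_range_comp_mul_mod hcop.symm fun j => (-1) ^ j * x ^ p ^ (d * j)]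
    simp only [neg_one_pow_mul_mod hodd heven]

theorem stmt3 (p : ℕ) [Fact p.Prime] (n k : ℕ) (hn : 0 < n) (hk : 0 < k)
    (d : ℕ) (hd : d = Nat.gcd n k) :
    (∀ x ∈ Ffield p n, Tmap p k (Nat.lcm n k) x = Tmap p d n x) ∧
    (Even (Nat.lcm n k / k) → ∀ x ∈ Ffield p n,
      Smap p k (Nat.lcm n k) x = Smap p d n x) :=
  stmt3_general p n k hk d hd
end

section
/- Let p be a prime and let l, k be positive integers with l | k and k/l even. Then the set of zeros of S_l^k in the algebraic closure of 𝔽_p equals {x + x^{p^l} : x ∈ 𝔽_{p^k}}. -/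
open Finset

open Polynomial

/-!
Write `q = p ^ l` and `n = k / l`. In characteristic `p` the sum `Smap p l k` telescopes on
`x + x ^ q`: `Smap p l k (x + x ^ q) = x - (-1) ^ n x ^ (p ^ k)`, which for even `n` is
`x - x ^ (p ^ k)`. This vanishes exactly when `x ∈ 𝔽_{p^k}`, and every element of the algebraic
closure has the form `x + x ^ q` since `X ^ q + X - z` has a root.
-/

theorem IsAlgClosed.exists_add_pow_eq {K : Type*} [Field K] [IsAlgClosed K] {q : ℕ} (hq : 1 < q)
    (z : K) : ∃ x : K, x + x ^ q = z := by
  have hdeg : ((X : K[X]) ^ q + (X - C z)).natDegree = q := by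
    rw [natDegree_add_eq_left_of_natDegree_lt] <;> simp [hq]
  obtain ⟨x, hx⟩ := IsAlgClosed.exists_root (X ^ q + (X - C z))
    (natDegree_pos_iff_degree_pos.mp (by omega)).ne'
  refine ⟨x, ?_⟩
  simp only [IsRoot, eval_add, eval_pow, eval_X, eval_sub, eval_C] at hx
  linear_combination hx

theorem sum_range_neg_one_pow_mul_add_pow_expChar_pow {R : Type*} [CommRing R] (p : ℕ)
    [ExpChar R p] (l n : ℕ) (x : R) :
    ∑ i ∈ range n, (-1) ^ i * (x + x ^ p ^ l) ^ p ^ (l * i) =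
      x - (-1) ^ n * x ^ p ^ (l * n) := by
  have hterm (i : ℕ) : (-1 : R) ^ i * (x + x ^ p ^ l) ^ p ^ (l * i) =
      (-1) ^ i * x ^ p ^ (l * i) - (-1) ^ (i + 1) * x ^ p ^ (l * (i + 1)) := by
    rw [add_pow_expChar_pow, ← pow_mul, ← pow_add, mul_add_one, add_comm l]
    ring
  simp only [hterm, sum_range_sub', pow_zero, mul_zero, one_mul, pow_one]

theorem Smap_add_pow_of_even (p : ℕ) [Fact p.Prime] {l k : ℕ} (hlk : l ∣ k)
    (heven : Even (k / l)) (x : AlgebraicClosure (ZMod p)) :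
    Smap p l k (x + x ^ p ^ l) = x - x ^ p ^ k := by
  rw [Smap, sum_range_neg_one_pow_mul_add_pow_expChar_pow, heven.neg_one_pow, one_mul,
    Nat.mul_div_cancel' hlk]

theorem stmt6_general (p : ℕ) [Fact p.Prime] (l k : ℕ) (hl : 0 < l) (hlk : l ∣ k)
    (heven : Even (k / l)) :
    {x : AlgebraicClosure (ZMod p) | Smap p l k x = 0} =
      (fun x => x + x ^ p ^ l) '' Ffield p k := by
  ext z
  constructor
  · intro hz
    have hq : 1 < p ^ l := Nat.one_lt_pow hl.ne' (Fact.out : p.Prime).one_lt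
    obtain ⟨x, rfl⟩ := IsAlgClosed.exists_add_pow_eq hq z
    rw [Set.mem_ofPred_eq, Smap_add_pow_of_even p hlk heven, sub_eq_zero] at hz
    exact ⟨x, hz.symm, rfl⟩
  · rintro ⟨x, hx, rfl⟩
    rw [Set.mem_ofPred_eq, Smap_add_pow_of_even p hlk heven, hx, sub_self]

theorem stmt6 (p : ℕ) [Fact p.Prime] (l k : ℕ) (hl : 0 < l) (hk : 0 < k) (hlk : l ∣ k)
    (heven : Even (k / l)) :
    {x : AlgebraicClosure (ZMod p) | Smap p l k x = 0} =
      (fun x => x + x ^ p ^ l) '' Ffield p k :=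
  stmt6_general p l k hl hlk heven
end

section
/- Let p be a prime and let l, k be positive integers with l | k and k/l odd. Then the set of zeros of S_l^k in the algebraic closure of 𝔽_p equals {(x + x^{p^l}) − (x + x^{p^l})^{p^k} : x ∈ 𝔽_{p^{2k}}}. -/
/-!
Write `q = p^l`, `Q = p^k`, `n = k/l`, `f x = x + x^q` and `g y = y - y^Q`, so that the map in the
statement is `g ∘ f`. The sum `S (f x)` telescopes to `x - (-1)^n x^Q = x + x^Q`, and `S` commutes
with `g` because it is additive and commutes with Frobenius; hence `S (g (f x)) = x - x^(Q^2)`, which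
vanishes on `𝔽_{Q^2}`.

Equality is then a count: the zeros of `S` are roots of a nonzero polynomial of degree `p^(k-l)`,
while `f` and `g` are additive with kernels of size at most `q` and `Q`, so `g ∘ f` maps the `Q^2`
elements of `𝔽_{Q^2}` onto at least `Q^2 / (q Q) = p^(k-l)` points.
-/

open Finset

open Polynomial

variable {K : Type*}

section AlternatingFrobeniusSum

variable [CommRing K]

def altFrobeniusSum (p l n : ℕ) (x : K) : K :=
  ∑ i ∈ range n, (-1) ^ i * x ^ p ^ (l * i)

variable (K) in
noncomputable def altFrobeniusPoly (p l n : ℕ) : K[X] :=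
  ∑ i ∈ range n, monomial (p ^ (l * i)) ((-1 : K) ^ i)

theorem eval_altFrobeniusPoly (p l n : ℕ) (x : K) :
    (altFrobeniusPoly K p l n).eval x = altFrobeniusSum p l n x := by
  simp [altFrobeniusPoly, altFrobeniusSum, eval_finsetSum]

theorem natDegree_altFrobeniusPoly_le {p : ℕ} (hp : 0 < p) (l n : ℕ) :
    (altFrobeniusPoly K p l n).natDegree ≤ p ^ (l * (n - 1)) := by
  refine natDegree_sum_le_of_forall_le _ _ fun i hi => (natDegree_monomial_le _).trans ?_
  have : i ≤ n - 1 := by have := mem_range.1 hi; omega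
  exact Nat.pow_le_pow_right hp (Nat.mul_le_mul_left l this)

theorem coeff_one_altFrobeniusPoly {p l n : ℕ} (hp : 1 < p) (hl : 0 < l) (hn : 0 < n) :
    (altFrobeniusPoly K p l n).coeff 1 = 1 := by
  rw [altFrobeniusPoly, finsetSum_coeff, sum_eq_single_of_mem 0 (mem_range.2 hn)]
  · simp
  · intro i _ hi
    rw [coeff_monomial, if_neg (Nat.one_lt_pow (by positivity) hp).ne']

variable (p : ℕ) [ExpChar K p]

theorem altFrobeniusSum_add_pow (l n : ℕ) (x : K) :
    altFrobeniusSum p l n (x + x ^ p ^ l) = x - (-1) ^ n * x ^ p ^ (l * n) := by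
  have telescope (i : ℕ) : (-1) ^ i * (x + x ^ p ^ l) ^ p ^ (l * i) =
      (-1) ^ i * x ^ p ^ (l * i) - (-1) ^ (i + 1) * x ^ p ^ (l * (i + 1)) := by
    rw [add_pow_expChar_pow, ← pow_mul, ← pow_add, mul_add_one, add_comm l]
    ring
  rw [altFrobeniusSum, sum_congr rfl fun i _ => telescope i, sum_range_sub']
  simp

theorem altFrobeniusSum_pow_expChar_pow (l n m : ℕ) (y : K) :
    altFrobeniusSum p l n y ^ p ^ m = altFrobeniusSum p l n (y ^ p ^ m) := by
  rw [← iterateFrobenius_def (R := K) (p := p) (n := m), altFrobeniusSum, map_sum]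
  refine sum_congr rfl fun i _ => ?_
  rw [map_mul, map_pow, map_neg, map_one, iterateFrobenius_def, pow_right_comm]

theorem altFrobeniusSum_sub (l n : ℕ) (y z : K) :
    altFrobeniusSum p l n (y - z) = altFrobeniusSum p l n y - altFrobeniusSum p l n z := by
  simp only [altFrobeniusSum, sub_pow_expChar_pow, mul_sub, sum_sub_distrib]

theorem altFrobeniusSum_eq_zero_of_pow_eq_self {l n : ℕ} (hn : Odd n) {x : K}
    (hx : x ^ p ^ (2 * (l * n)) = x) :
    altFrobeniusSum p l n ((x + x ^ p ^ l) - (x + x ^ p ^ l) ^ p ^ (l * n)) = 0 := by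
  rw [altFrobeniusSum_sub, ← altFrobeniusSum_pow_expChar_pow, altFrobeniusSum_add_pow,
    hn.neg_one_pow, neg_one_mul, sub_neg_eq_add, add_pow_expChar_pow, ← pow_mul, ← pow_add,
    ← two_mul, hx]
  ring

end AlternatingFrobeniusSum

theorem AddMonoidHom.ncard_le_ncard_ker_mul_ncard_image {G H : Type*} [AddGroup G] [AddGroup H]
    (f : G →+ H) {A : Set G} (hA : A.Finite) (hker : (f.ker : Set G).Finite) :
    A.ncard ≤ (f.ker : Set G).ncard * (f '' A).ncard := by
  classical
  lift A to Finset G using hA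
  rw [Set.ncard_coe_finset, ← Finset.coe_image, Set.ncard_coe_finset]
  refine card_le_mul_card_image A _ fun b hb => ?_
  obtain ⟨a, -, rfl⟩ := Finset.mem_image.1 hb
  rw [← Set.ncard_coe_finset]
  refine Set.ncard_le_ncard_of_injOn (fun t => -a + t) (fun t ht => ?_)
    (fun s _ t _ h => add_left_cancel h) hker
  simp_all [f.mem_ker]

theorem AddMonoidHom.ncard_le_ncard_ker_mul_ncard_ker_mul_ncard_image_comp {G H M : Type*}
    [AddGroup G] [AddGroup H] [AddGroup M] (f : G →+ H) (g : H →+ M) {A : Set G} (hA : A.Finite)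
    (hf : (f.ker : Set G).Finite) (hg : (g.ker : Set H).Finite) :
    A.ncard ≤ (f.ker : Set G).ncard * (g.ker : Set H).ncard * (g.comp f '' A).ncard := by
  rw [coe_comp, Set.image_comp, mul_assoc]
  exact (f.ncard_le_ncard_ker_mul_ncard_image hA hf).trans
    (Nat.mul_le_mul_left _ (g.ncard_le_ncard_ker_mul_ncard_image (hA.image f) hg))

theorem setOf_pow_eq_mul_eq_setOf_eval [CommRing K] (d : ℕ) (c : K) :
    {x : K | x ^ d = c * x} = {x | (X ^ d - C c * X).eval x = 0} := by
  simp [sub_eq_zero]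

section RootCounting

variable [CommRing K] [IsDomain K]

theorem Polynomial.finite_setOf_eval_eq_zero {P : K[X]} (hP : P ≠ 0) :
    {x | P.eval x = 0}.Finite := by
  convert P.rootSet_finite K
  ext x
  simp [mem_rootSet_of_ne hP]

theorem Polynomial.ncard_setOf_eval_eq_zero_le {P : K[X]} (hP : P ≠ 0) :
    {x | P.eval x = 0}.ncard ≤ P.natDegree := by
  convert P.ncard_rootSet_le K
  ext x
  simp [mem_rootSet_of_ne hP]

theorem Polynomial.natDegree_X_pow_sub_C_mul_X {d : ℕ} (hd : 1 < d) (c : K) :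
    (X ^ d - C c * X).natDegree = d := by
  rw [natDegree_sub_eq_left_of_natDegree_lt] <;> rw [natDegree_X_pow]
  exact ((natDegree_C_mul_le c X).trans natDegree_X_le).trans_lt hd

theorem Polynomial.X_pow_sub_C_mul_X_ne_zero {d : ℕ} (hd : 1 < d) (c : K) :
    (X ^ d - C c * X : K[X]) ≠ 0 :=
  ne_zero_of_natDegree_gt ((natDegree_X_pow_sub_C_mul_X hd c).symm ▸ hd)

theorem finite_setOf_pow_eq_mul {d : ℕ} (hd : 1 < d) (c : K) :
    {x : K | x ^ d = c * x}.Finite := by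
  rw [setOf_pow_eq_mul_eq_setOf_eval]
  exact finite_setOf_eval_eq_zero (X_pow_sub_C_mul_X_ne_zero hd c)

theorem ncard_setOf_pow_eq_mul_le {d : ℕ} (hd : 1 < d) (c : K) :
    {x : K | x ^ d = c * x}.ncard ≤ d := by
  rw [setOf_pow_eq_mul_eq_setOf_eval]
  exact (ncard_setOf_eval_eq_zero_le (X_pow_sub_C_mul_X_ne_zero hd c)).trans_eq
    (natDegree_X_pow_sub_C_mul_X hd c)

theorem altFrobeniusPoly_ne_zero {p l n : ℕ} (hp : 1 < p) (hl : 0 < l) (hn : 0 < n) :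
    altFrobeniusPoly K p l n ≠ 0 := fun h => by
  simpa [h] using coeff_one_altFrobeniusPoly (K := K) hp hl hn

theorem finite_setOf_altFrobeniusSum_eq_zero {p l n : ℕ} (hp : 1 < p) (hl : 0 < l) (hn : 0 < n) :
    {x : K | altFrobeniusSum p l n x = 0}.Finite := by
  simpa only [eval_altFrobeniusPoly] using
    finite_setOf_eval_eq_zero (altFrobeniusPoly_ne_zero (K := K) hp hl hn)

theorem ncard_setOf_altFrobeniusSum_eq_zero_le {p l n : ℕ} (hp : 1 < p) (hl : 0 < l)
    (hn : 0 < n) : {x : K | altFrobeniusSum p l n x = 0}.ncard ≤ p ^ (l * (n - 1)) := by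
  simpa only [eval_altFrobeniusPoly] using
    (ncard_setOf_eval_eq_zero_le (altFrobeniusPoly_ne_zero (K := K) hp hl hn)).trans
      (natDegree_altFrobeniusPoly_le (by omega) l n)

end RootCounting

section AlgebraicallyClosed

variable [Field K] [IsAlgClosed K] (p : ℕ) [Fact p.Prime] [CharP K p]

theorem ncard_setOf_pow_eq_self {m : ℕ} (hm : m ≠ 0) : {x : K | x ^ p ^ m = x}.ncard = p ^ m := by
  have hsep := galois_poly_separable (K := K) p _ (dvd_pow_self p hm)
  have hset : {x : K | x ^ p ^ m = x} = (X ^ p ^ m - X : K[X]).rootSet K := by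
    ext x
    simp [mem_rootSet_of_ne hsep.ne_zero, sub_eq_zero]
  rw [hset, Set.ncard_eq_toFinset_card', Set.toFinset_card,
    card_rootSet_eq_natDegree hsep (IsAlgClosed.splits _),
    FiniteField.X_pow_card_sub_X_natDegree_eq K (Nat.one_lt_pow hm (Fact.out : p.Prime).one_lt)]

theorem pow_le_ncard_image_setOf_pow_eq_self {l n : ℕ} (hl : 0 < l) (hn : 0 < n) :
    p ^ (l * (n - 1)) ≤ ((fun x => (x + x ^ p ^ l) - (x + x ^ p ^ l) ^ p ^ (l * n)) ''
        {x : K | x ^ p ^ (2 * (l * n)) = x}).ncard := by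
  have hp : 1 < p := (Fact.out : p.Prime).one_lt
  have hq : 1 < p ^ l := Nat.one_lt_pow hl.ne' hp
  have hQ : 1 < p ^ (l * n) := Nat.one_lt_pow (by positivity) hp
  set A := {x : K | x ^ p ^ (2 * (l * n)) = x}
  let f : K →+ K := AddMonoidHom.id K + iterateFrobenius K p l
  let g : K →+ K := AddMonoidHom.id K - iterateFrobenius K p (l * n)
  have hker_f : (f.ker : Set K) = {x | x ^ p ^ l = -1 * x} := by
    ext x; simp [f, AddMonoidHom.mem_ker, iterateFrobenius_def, add_eq_zero_iff_eq_neg']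
  have hker_g : (g.ker : Set K) = {x | x ^ p ^ (l * n) = 1 * x} := by
    ext x; simp [g, AddMonoidHom.mem_ker, iterateFrobenius_def, sub_eq_zero, eq_comm]
  have hA : A.Finite := by
    simpa using finite_setOf_pow_eq_mul (Nat.one_lt_pow (by positivity) hp) (1 : K)
  have hexp : p ^ l * p ^ (l * n) * p ^ (l * (n - 1)) = p ^ (2 * (l * n)) := by
    rw [← pow_add, ← pow_add, Nat.mul_sub_one]
    have := Nat.le_mul_of_pos_right l hn
    congr 1
    omega
  have hcount : p ^ l * p ^ (l * n) * p ^ (l * (n - 1)) ≤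
      p ^ l * p ^ (l * n) * (g.comp f '' A).ncard := by
    rw [hexp, ← ncard_setOf_pow_eq_self (K := K) p (by positivity)]
    refine (f.ncard_le_ncard_ker_mul_ncard_ker_mul_ncard_image_comp g hA
      (hker_f ▸ finite_setOf_pow_eq_mul hq _) (hker_g ▸ finite_setOf_pow_eq_mul hQ _)).trans ?_
    rw [hker_f, hker_g]
    exact Nat.mul_le_mul_right _
      (Nat.mul_le_mul (ncard_setOf_pow_eq_mul_le hq (-1 : K)) (ncard_setOf_pow_eq_mul_le hQ (1 : K)))
  exact Nat.le_of_mul_le_mul_left hcount (by positivity)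

theorem image_eq_setOf_altFrobeniusSum_eq_zero {l n : ℕ} (hl : 0 < l) (hn : Odd n) :
    (fun x => (x + x ^ p ^ l) - (x + x ^ p ^ l) ^ p ^ (l * n)) ''
        {x : K | x ^ p ^ (2 * (l * n)) = x} =
      {x | altFrobeniusSum p l n x = 0} := by
  have hp : 1 < p := (Fact.out : p.Prime).one_lt
  refine Set.eq_of_subset_of_ncard_le ?_ ?_ (finite_setOf_altFrobeniusSum_eq_zero hp hl hn.pos)
  · rintro _ ⟨x, hx, rfl⟩
    exact altFrobeniusSum_eq_zero_of_pow_eq_self p hn hx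
  · exact (ncard_setOf_altFrobeniusSum_eq_zero_le hp hl hn.pos).trans
      (pow_le_ncard_image_setOf_pow_eq_self p hl hn.pos)

end AlgebraicallyClosed

theorem stmt7_general (p : ℕ) [Fact p.Prime] (l k : ℕ) (hl : 0 < l) (hlk : l ∣ k)
    (hodd : Odd (k / l)) :
    {x : AlgebraicClosure (ZMod p) | Smap p l k x = 0} =
      (fun x => (x + x ^ p ^ l) - (x + x ^ p ^ l) ^ p ^ k) '' Ffield p (2 * k) := by
  obtain ⟨n, rfl⟩ := hlk
  have hkl : l * n / l = n := Nat.mul_div_cancel_left n hl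
  rw [hkl] at hodd
  have hS (x : AlgebraicClosure (ZMod p)) : Smap p l (l * n) x = altFrobeniusSum p l n x := by
    rw [Smap, hkl, altFrobeniusSum]
  simp only [hS]
  exact (image_eq_setOf_altFrobeniusSum_eq_zero p hl hodd).symm

theorem stmt7 (p : ℕ) [Fact p.Prime] (l k : ℕ) (hl : 0 < l) (hk : 0 < k) (hlk : l ∣ k)
    (hodd : Odd (k / l)) :
    {x : AlgebraicClosure (ZMod p) | Smap p l k x = 0} =
      (fun x => (x + x ^ p ^ l) - (x + x ^ p ^ l) ^ p ^ k) '' Ffield p (2 * k) :=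
  stmt7_general p l k hl hlk hodd
end

section
/- Let p be a prime, let n, k, l be positive integers with l | k, and set d = gcd(n,k), e = gcd(n,l), L = lcm(d,l). Then the set {x ∈ 𝔽_{p^n} : T_l^k(x) = 0} equals 𝔽_{p^d} if p divides k/L, and equals {x − x^{p^e} : x ∈ 𝔽_{p^d}} otherwise. Consequently its cardinality is p^d if p divides k/L, and p^{d−e} otherwise. -/
open Finset

/-!
Telescoping gives `T(x)^{p^l} - T(x) = x^{p^k} - x` for `T = T_l^k`, so every zero of `T` in
`𝔽_{p^n}` lies in `𝔽_{p^d}`. On `𝔽_{p^d}` the exponent `l i` only matters modulo `d`, and as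
`l/e` is a unit modulo `d/e`, the sum defining `T` runs `k/L` times through the sum defining the
trace `T_e^d` of `𝔽_{p^d}/𝔽_{p^e}`: there `T = (k/L) • T_e^d`. If `p ∣ k/L` this vanishes.
Otherwise the zeros form the kernel of the trace, and additive Hilbert 90 identifies it: the image
of `x ↦ x - x^{p^e}` lies in the kernel and has `p^{d-e}` elements (its kernel is `𝔽_{p^e}`),
while the kernel consists of roots of a polynomial of degree `p^{d-e}`.
-/

namespace Function.Periodic

variable {M : Type*} [AddCommMonoid M] {g : ℕ → M} {P : ℕ}

theorem sum_range_mul_eq_nsmul (hg : Periodic g P) (c : ℕ) :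
    ∑ i ∈ range (c * P), g i = c • ∑ i ∈ range P, g i := by
  induction c with
  | zero => simp
  | succ c ih =>
    rw [Nat.succ_mul, sum_range_add, ih, succ_nsmul]
    congr 1
    exact sum_congr rfl fun i _ => by rw [add_comm]; exact hg.nat_mul c i

theorem sum_range_comp_mul_of_coprime (hg : Periodic g P) {u : ℕ} (hu : u.Coprime P) :
    ∑ i ∈ range P, g (u * i) = ∑ i ∈ range P, g i := by
  have hmaps : ∀ i ∈ range P, u * i % P ∈ range P := fun i hi =>
    mem_range.2 (Nat.mod_lt _ (pos_of_ne_zero (by rintro rfl; simp at hi)))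
  have hinj : Set.InjOn (fun i => u * i % P) (range P) := fun i hi j hj hij => by
    simp only [coe_range, Set.mem_Iio] at hi hj
    simpa [Nat.ModEq, Nat.mod_eq_of_lt hi, Nat.mod_eq_of_lt hj] using
      Nat.ModEq.cancel_left_of_coprime (Nat.coprime_comm.1 hu) hij
  exact sum_nbij (fun i => u * i % P) hmaps hinj
    (surjOn_of_injOn_of_card_le _ hmaps hinj le_rfl) fun i _ => (hg.map_mod_nat _).symm

end Function.Periodic

section

open Function Polynomial

variable {p : ℕ} [Fact p.Prime]

local notation "K" => AlgebraicClosure (ZMod p)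

variable (p) in
noncomputable def ffieldSubfield (m : ℕ) : Subfield K :=
  (iterateFrobenius K p m).eqLocusField (RingHom.id K)

theorem coe_ffieldSubfield (m : ℕ) : (ffieldSubfield p m : Set K) = Ffield p m := by
  ext x
  simp [ffieldSubfield, Ffield, iterateFrobenius_def]

theorem mem_ffield_iff_isPeriodicPt {m : ℕ} {x : K} :
    x ∈ Ffield p m ↔ IsPeriodicPt (frobenius K p) m x := by
  rw [IsPeriodicPt, IsFixedPt, iterate_frobenius]
  rfl

theorem periodic_pow_pow_of_mem_ffield {m : ℕ} {x : K} (hx : x ∈ Ffield p m) :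
    Periodic (fun j => x ^ p ^ j) m := fun j => by
  show x ^ p ^ (j + m) = x ^ p ^ j
  rw [pow_add, mul_comm, pow_mul, show x ^ p ^ m = x from hx]

theorem ffield_eq_rootSet {m : ℕ} (hm : 0 < m) :
    Ffield p m = ((X : K[X]) ^ p ^ m - X).rootSet K := by
  have hne : ((X : K[X]) ^ p ^ m - X) ≠ 0 :=
    FiniteField.X_pow_card_pow_sub_X_ne_zero K hm.ne' (Fact.out : p.Prime).one_lt
  ext x
  simp [Ffield, mem_rootSet, hne, sub_eq_zero]

theorem ncard_ffield {m : ℕ} (hm : 0 < m) : (Ffield p m).ncard = p ^ m := by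
  have hsep : ((X : K[X]) ^ p ^ m - X).Separable :=
    galois_poly_separable p (p ^ m) (dvd_pow_self p hm.ne')
  rw [ffield_eq_rootSet hm, Set.ncard_eq_toFinset_card', Set.toFinset_card,
    card_rootSet_eq_natDegree hsep (IsAlgClosed.splits _),
    FiniteField.X_pow_card_pow_sub_X_natDegree_eq K hm.ne' (Fact.out : p.Prime).one_lt]

theorem tmap_pow_sub_tmap {l k : ℕ} (hlk : l ∣ k) (x : K) :
    Tmap p l k x ^ p ^ l - Tmap p l k x = x ^ p ^ k - x := by
  calc Tmap p l k x ^ p ^ l - Tmap p l k x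
      = ∑ i ∈ range (k / l), (x ^ p ^ (l * (i + 1)) - x ^ p ^ (l * i)) := by
        rw [Tmap, sum_pow_char_pow, ← sum_sub_distrib]
        refine sum_congr rfl fun i _ => ?_
        rw [← pow_mul, ← pow_add, mul_add_one]
    _ = x ^ p ^ k - x := by
        rw [sum_range_sub (fun i => x ^ p ^ (l * i)), Nat.mul_div_cancel' hlk, mul_zero, pow_zero,
          pow_one]

theorem mem_ffield_of_tmap_eq_zero {l k : ℕ} (hlk : l ∣ k) {x : K} (hT : Tmap p l k x = 0) :
    x ∈ Ffield p k := by
  have h := tmap_pow_sub_tmap hlk x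
  rwa [hT, zero_pow (pow_ne_zero _ (Fact.out : p.Prime).ne_zero), sub_zero, eq_comm,
    sub_eq_zero] at h

theorem setOf_tmap_eq_zero_eq_gcd {l k : ℕ} (hlk : l ∣ k) (n : ℕ) :
    {x | x ∈ Ffield p n ∧ Tmap p l k x = 0} =
      {x | x ∈ Ffield p (n.gcd k) ∧ Tmap p l k x = 0} := by
  ext x
  simp only [Set.mem_ofPred_eq, mem_ffield_iff_isPeriodicPt]
  refine ⟨fun ⟨hx, hT⟩ => ⟨hx.gcd ?_, hT⟩, fun ⟨hx, hT⟩ => ⟨hx.trans_dvd (n.gcd_dvd_left k), hT⟩⟩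
  exact mem_ffield_iff_isPeriodicPt.1 (mem_ffield_of_tmap_eq_zero hlk hT)

theorem tmap_eq_nsmul_tmap_gcd {d l k : ℕ} (hd : 0 < d) (hl : 0 < l) (hk : d.lcm l ∣ k) {x : K}
    (hx : x ∈ Ffield p d) : Tmap p l k x = (k / d.lcm l) • Tmap p (d.gcd l) d x := by
  set e := d.gcd l
  have he : 0 < e := Nat.gcd_pos_of_pos_left l hd
  obtain ⟨P, hP⟩ : e ∣ d := Nat.gcd_dvd_left d l
  obtain ⟨u, hu⟩ : e ∣ l := Nat.gcd_dvd_right d l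
  have hdP : d / e = P := by rw [hP, Nat.mul_div_cancel_left P he]
  have hlu : l / e = u := by rw [hu, Nat.mul_div_cancel_left u he]
  have hcop : u.Coprime P := by
    have h : (l / e).Coprime (d / e) := (Nat.coprime_div_gcd_div_gcd he).symm
    rwa [hlu, hdP] at h
  have hL : d.lcm l = l * P := by
    rw [Nat.lcm, ← hdP, Nat.mul_comm, Nat.mul_div_assoc l (Nat.gcd_dvd_left d l)]
  obtain ⟨q, hq⟩ := hk
  have hkL : k / d.lcm l = q := by rw [hq, Nat.mul_div_cancel_left q (by positivity)]
  have hkl : k / l = q * P := by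
    rw [hq, hL, Nat.mul_assoc, Nat.mul_div_cancel_left _ hl, mul_comm]
  set g : ℕ → K := fun i => x ^ p ^ (e * i)
  have hg : Periodic g P := fun i => by
    simp only [g, mul_add, ← hP]
    exact periodic_pow_pow_of_mem_ffield hx _
  have hgu : Periodic (fun i => g (u * i)) P := fun i => by
    simp only [mul_add]
    exact hg.nat_mul u _
  calc Tmap p l k x = ∑ i ∈ range (q * P), g (u * i) := by
        rw [Tmap, hkl]
        simp only [g, hu, mul_assoc]
    _ = q • ∑ i ∈ range P, g i := by
        rw [hgu.sum_range_mul_eq_nsmul q, hg.sum_range_comp_mul_of_coprime hcop]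
    _ = (k / d.lcm l) • Tmap p e d x := by
        rw [hkL, Tmap, hdP]

theorem tmap_sub_pow_eq_zero {e d : ℕ} (hed : e ∣ d) {x : K} (hx : x ∈ Ffield p d) :
    Tmap p e d (x - x ^ p ^ e) = 0 := by
  have h := tmap_pow_sub_tmap hed x
  rw [show x ^ p ^ d - x = 0 from sub_eq_zero.2 hx] at h
  calc Tmap p e d (x - x ^ p ^ e) = Tmap p e d x - Tmap p e d x ^ p ^ e := by
        rw [Tmap, Tmap, sum_pow_char_pow, ← sum_sub_distrib]
        refine sum_congr rfl fun i _ => ?_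
        rw [sub_pow_char_pow, ← pow_mul, ← pow_mul, mul_comm (p ^ e)]
    _ = 0 := by rw [← neg_sub, h, neg_zero]

theorem finite_setOf_tmap_eq_zero_and_ncard_le {e d : ℕ} (he : 0 < e) (hd : 0 < d)
    (hed : e ∣ d) :
    {x : K | Tmap p e d x = 0}.Finite ∧ {x : K | Tmap p e d x = 0}.ncard ≤ p ^ (d - e) := by
  obtain ⟨P, rfl⟩ := hed
  have hP : 0 < P := Nat.pos_of_mul_pos_left hd
  set Q : K[X] := ∑ j ∈ range P, X ^ p ^ (e * j)
  have hcoeff : Q.coeff (p ^ (e * (P - 1))) = 1 := by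
    rw [finsetSum_coeff, sum_eq_single (P - 1)]
    · simp
    · intro j _ hj
      rw [coeff_X_pow, if_neg]
      exact fun h => hj (mul_left_cancel₀ he.ne'
        (Nat.pow_right_injective (Fact.out : p.Prime).two_le h)).symm
    · intro h
      simp at h
      omega
  have hQ : Q ≠ 0 := fun h => by simp [h] at hcoeff
  have hdeg : Q.natDegree ≤ p ^ (e * P - e) := by
    refine natDegree_sum_le_of_forall_le _ _ fun j hj => ?_
    rw [natDegree_X_pow, ← Nat.mul_sub_one]
    exact Nat.pow_le_pow_right (Fact.out : p.Prime).pos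
      (Nat.mul_le_mul_left e (by have := mem_range.1 hj; omega))
  have hroots : {x : K | Tmap p e (e * P) x = 0} = Q.rootSet K := by
    ext x
    simp [mem_rootSet_of_ne hQ, Q, Tmap, Nat.mul_div_cancel_left _ he]
  rw [hroots]
  exact ⟨rootSet_finite Q K, (ncard_rootSet_le Q K).trans hdeg⟩

theorem ncard_image_sub_pow {e d : ℕ} (he : 0 < e) (hd : 0 < d) (hed : e ∣ d) :
    ((fun x : K => x - x ^ p ^ e) '' Ffield p d).ncard = p ^ (d - e) := by
  let A := (ffieldSubfield p d).toAddSubgroup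
  let φ : A →+ K := (AddMonoidHom.id K - (iterateFrobenius K p e).toAddMonoidHom).comp A.subtype
  have hA : Nat.card A = p ^ d := by
    rw [← ncard_ffield hd, ← coe_ffieldSubfield, ← Nat.card_coe_set_eq]
    rfl
  have hker : Nat.card φ.ker = p ^ e := by
    rw [← ncard_ffield he, ← Nat.card_coe_set_eq]
    refine Nat.card_congr ((Equiv.subtypeEquivRight fun a => ?_).trans
      (Equiv.subtypeSubtypeEquivSubtype fun {x} hx => ?_))
    · simp [φ, iterateFrobenius_def, sub_eq_zero, eq_comm, Ffield]
    · change x ∈ (ffieldSubfield p d : Set K)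
      rw [coe_ffieldSubfield, mem_ffield_iff_isPeriodicPt]
      exact (mem_ffield_iff_isPeriodicPt.1 hx).trans_dvd hed
  have hrange : (φ.range : Set K) = (fun x : K => x - x ^ p ^ e) '' Ffield p d := by
    ext y
    simp [φ, iterateFrobenius_def, ← coe_ffieldSubfield, A]
  have h := AddSubgroup.card_mul_index φ.ker
  rw [AddSubgroup.index_ker, hker, hA, ← SetLike.coe_sort_coe, hrange, Nat.card_coe_set_eq] at h
  rw [← Nat.pow_div (Nat.le_of_dvd hd hed) (Fact.out : p.Prime).pos, ← h,
    Nat.mul_div_cancel_left _ (pow_pos (Fact.out : p.Prime).pos e)]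

theorem setOf_tmap_eq_zero_eq_image {e d : ℕ} (he : 0 < e) (hd : 0 < d) (hed : e ∣ d) :
    {x | x ∈ Ffield p d ∧ Tmap p e d x = 0} = (fun x => x - x ^ p ^ e) '' Ffield p d := by
  obtain ⟨hfin, hle⟩ := finite_setOf_tmap_eq_zero_and_ncard_le (p := p) he hd hed
  have hsub :
      (fun x => x - x ^ p ^ e) '' Ffield p d ⊆ {x | x ∈ Ffield p d ∧ Tmap p e d x = 0} := by
    rintro _ ⟨x, hx, rfl⟩
    refine ⟨?_, tmap_sub_pow_eq_zero hed hx⟩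
    rw [← coe_ffieldSubfield] at hx ⊢
    exact sub_mem hx (pow_mem hx _)
  refine (Set.eq_of_subset_of_ncard_le hsub ?_ (hfin.subset fun x hx => hx.2)).symm
  calc {x | x ∈ Ffield p d ∧ Tmap p e d x = 0}.ncard
      ≤ {x : K | Tmap p e d x = 0}.ncard := Set.ncard_le_ncard (fun x hx => hx.2) hfin
    _ ≤ p ^ (d - e) := hle
    _ = ((fun x => x - x ^ p ^ e) '' Ffield p d).ncard := (ncard_image_sub_pow he hd hed).symm

end

theorem stmt8_general (p : ℕ) [Fact p.Prime] (n k l : ℕ) (hn : 0 < n) (hl : 0 < l)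
    (hlk : l ∣ k) (d e L : ℕ)
    (hd : d = Nat.gcd n k) (he : e = Nat.gcd n l) (hL : L = Nat.lcm d l) :
    (p ∣ k / L →
      {x | x ∈ Ffield p n ∧ Tmap p l k x = 0} = Ffield p d ∧
      {x | x ∈ Ffield p n ∧ Tmap p l k x = 0}.ncard = p ^ d) ∧
    (¬ p ∣ k / L →
      {x | x ∈ Ffield p n ∧ Tmap p l k x = 0} = (fun x => x - x ^ p ^ e) '' Ffield p d ∧
      {x | x ∈ Ffield p n ∧ Tmap p l k x = 0}.ncard = p ^ (d - e)) := by
  have hd0 : 0 < d := hd ▸ Nat.gcd_pos_of_pos_left k hn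
  have he0 : 0 < e := he ▸ Nat.gcd_pos_of_pos_left l hn
  have hde : d.gcd l = e := by rw [hd, he, Nat.gcd_assoc, Nat.gcd_eq_right hlk]
  have hed : e ∣ d := hde ▸ Nat.gcd_dvd_left d l
  have hLk : d.lcm l ∣ k := Nat.lcm_dvd (hd ▸ Nat.gcd_dvd_right n k) hlk
  have hT : ∀ x ∈ Ffield p d,
      Tmap p l k x = ((k / L : ℕ) : AlgebraicClosure (ZMod p)) * Tmap p e d x := fun x hx => by
    rw [hL, ← hde, ← nsmul_eq_mul]
    exact tmap_eq_nsmul_tmap_gcd hd0 hl hLk hx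
  have hS := setOf_tmap_eq_zero_eq_gcd (p := p) hlk n
  rw [← hd] at hS
  refine ⟨fun hp => ?_, fun hp => ?_⟩
  · have hS' : {x | x ∈ Ffield p n ∧ Tmap p l k x = 0} = Ffield p d := by
      rw [hS, Set.sep_eq_self_iff_mem_true]
      intro x hx
      rw [hT x hx, (CharP.cast_eq_zero_iff _ p _).2 hp, zero_mul]
    exact ⟨hS', by rw [hS', ncard_ffield hd0]⟩
  · have hS' :
        {x | x ∈ Ffield p n ∧ Tmap p l k x = 0} = (fun x => x - x ^ p ^ e) '' Ffield p d := by
      rw [hS, ← setOf_tmap_eq_zero_eq_image he0 hd0 hed]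
      ext x
      refine and_congr_right fun hx => ?_
      rw [hT x hx, mul_eq_zero, or_iff_right (mt (CharP.cast_eq_zero_iff _ p _).1 hp)]
    exact ⟨hS', by rw [hS', ncard_image_sub_pow he0 hd0 hed]⟩

theorem stmt8 (p : ℕ) [Fact p.Prime] (n k l : ℕ) (hn : 0 < n) (hk : 0 < k) (hl : 0 < l)
    (hlk : l ∣ k) (d e L : ℕ)
    (hd : d = Nat.gcd n k) (he : e = Nat.gcd n l) (hL : L = Nat.lcm d l) :
    (p ∣ k / L →
      {x | x ∈ Ffield p n ∧ Tmap p l k x = 0} = Ffield p d ∧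
      {x | x ∈ Ffield p n ∧ Tmap p l k x = 0}.ncard = p ^ d) ∧
    (¬ p ∣ k / L →
      {x | x ∈ Ffield p n ∧ Tmap p l k x = 0} = (fun x => x - x ^ p ^ e) '' Ffield p d ∧
      {x | x ∈ Ffield p n ∧ Tmap p l k x = 0}.ncard = p ^ (d - e)) :=
  stmt8_general p n k l hn hl hlk d e L hd he hL
end

section
/- Let p be a prime, let n, k, l be positive integers with l | k and k/l even, and set d = gcd(n,k), e = gcd(n,l). Suppose d/e is odd. Then {x ∈ 𝔽_{p^n} : S_l^k(x) = 0} = 𝔽_{p^d}, and consequently this set has cardinality p^d. -/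
open Finset

/-!
Write `σ = x ↦ x^{p^l}` and `m = k/l`, so that `S = S_l^k(x) = Σ_{i<m} (-1)^i σ^i x`. Since `m` is
even, `S + σ S` telescopes to `x - σ^m x = x - x^{p^k}`; hence `S = 0` forces `x ∈ 𝔽_{p^k}`, and
with `x ∈ 𝔽_{p^n}` this gives `x ∈ 𝔽_{p^d}`. Conversely, for `x ∈ 𝔽_{p^d}` put `r = d/e`: then
`l r = lcm(l, d)` because `gcd(l, d) = e`, so `σ^r x = x` and `r ∣ m`. As `r` is odd,
`i ↦ (-1)^i σ^i x` is antiperiodic with antiperiod `r`, and `m` is an even multiple of `r`, so the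
sum vanishes.
-/

open Function

theorem Function.Antiperiodic.sum_range_mul_eq_zero {M : Type*} [AddCommGroup M] {g : ℕ → M}
    {r : ℕ} (hg : Antiperiodic g r) {m : ℕ} (hm : Even m) : ∑ i ∈ range (r * m), g i = 0 := by
  obtain ⟨s, rfl⟩ := hm
  induction s with
  | zero => simp
  | succ s ih =>
    have hshift : ∀ j, g (r * (s + s) + r + j) = -g (r * (s + s) + j) := fun j => by
      rw [add_right_comm, hg]
    rw [show r * (s + 1 + (s + 1)) = r * (s + s) + r + r by ring, sum_range_add, sum_range_add, ih]
    simp [hshift]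

section AlternatingOrbitSum

variable {R : Type*} [Ring R]

theorem alternating_sum_iterate_add_map (φ : R →+* R) (x : R) {m : ℕ} (hm : Even m) :
    (∑ i ∈ range m, (-1) ^ i * φ^[i] x) + φ (∑ i ∈ range m, (-1) ^ i * φ^[i] x) =
      x - φ^[m] x := by
  have hφ : φ (∑ i ∈ range m, (-1) ^ i * φ^[i] x) =
      -∑ i ∈ range m, (-1) ^ (i + 1) * φ^[i + 1] x := by
    simp [map_sum, pow_succ, iterate_succ_apply']
  rw [hφ, ← sub_eq_add_neg, ← sum_sub_distrib,
    sum_range_sub' (fun i => (-1) ^ i * φ^[i] x), hm.neg_one_pow]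
  simp

theorem alternating_sum_iterate_eq_zero {f : R → R} {x : R} {r m : ℕ} (hx : IsPeriodicPt f r x)
    (hr : Odd r) (hrm : r ∣ m) (hm : Even m) : ∑ i ∈ range m, (-1) ^ i * f^[i] x = 0 := by
  obtain ⟨s, rfl⟩ := hrm
  have hs : Even s := (Nat.even_mul.mp hm).resolve_left (Nat.not_even_iff_odd.mpr hr)
  refine Antiperiodic.sum_range_mul_eq_zero (fun i => ?_) hs
  simp [pow_add, hr.neg_one_pow, iterate_add_apply, hx.eq]

end AlternatingOrbitSum

theorem isPeriodicPt_iterateFrobenius_iff {R : Type*} [CommSemiring R] (p : ℕ) [ExpChar R p]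
    (l m : ℕ) (x : R) :
    IsPeriodicPt (iterateFrobenius R p l) m x ↔ IsPeriodicPt (frobenius R p) (l * m) x := by
  rw [coe_iterateFrobenius, IsPeriodicPt, IsPeriodicPt, iterate_mul]

theorem Nat.mul_div_gcd_gcd_dvd {n k l : ℕ} (hlk : l ∣ k) :
    l * (Nat.gcd n k / Nat.gcd n l) ∣ k := by
  have hgcd : Nat.gcd l (Nat.gcd n k) = Nat.gcd n l := by
    rw [← Nat.gcd_assoc, Nat.gcd_comm l n, Nat.gcd_eq_left ((Nat.gcd_dvd_right n l).trans hlk)]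
  have hlcm : Nat.lcm l (Nat.gcd n k) = l * (Nat.gcd n k / Nat.gcd n l) := by
    rw [← hgcd]
    exact Nat.mul_div_assoc l (Nat.gcd_dvd_right _ _)
  exact hlcm ▸ Nat.lcm_dvd hlk (Nat.gcd_dvd_right n k)

section Frobenius

variable (p : ℕ) [Fact p.Prime]

theorem mem_Ffield_iff_isPeriodicPt (m : ℕ) (x : AlgebraicClosure (ZMod p)) :
    x ∈ Ffield p m ↔ IsPeriodicPt (frobenius _ p) m x := by
  rw [IsPeriodicPt, IsFixedPt, iterate_frobenius]
  rfl

theorem Smap_eq_sum_iterate (l k : ℕ) (x : AlgebraicClosure (ZMod p)) :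
    Smap p l k x = ∑ i ∈ range (k / l), (-1) ^ i * (iterateFrobenius _ p l)^[i] x := by
  simp only [Smap, ← coe_iterateFrobenius_mul, iterateFrobenius_def]

theorem mem_Ffield_of_Smap_eq_zero {l k : ℕ} (hlk : l ∣ k) (hkl : Even (k / l))
    {x : AlgebraicClosure (ZMod p)} (hx : Smap p l k x = 0) : x ∈ Ffield p k := by
  have h := alternating_sum_iterate_add_map (iterateFrobenius _ p l) x hkl
  rw [← Smap_eq_sum_iterate, hx, map_zero, add_zero, eq_comm, sub_eq_zero, eq_comm] at h
  rwa [mem_Ffield_iff_isPeriodicPt, ← Nat.mul_div_cancel' hlk,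
    ← isPeriodicPt_iterateFrobenius_iff]

theorem Smap_eq_zero_of_mem_Ffield {d l k r : ℕ} (hdl : d ∣ l * r) (hr : Odd r)
    (hrk : r ∣ k / l) (hkl : Even (k / l)) {x : AlgebraicClosure (ZMod p)}
    (hx : x ∈ Ffield p d) : Smap p l k x = 0 := by
  rw [mem_Ffield_iff_isPeriodicPt] at hx
  rw [Smap_eq_sum_iterate]
  refine alternating_sum_iterate_eq_zero ?_ hr hrk hkl
  rw [isPeriodicPt_iterateFrobenius_iff]
  exact hx.trans_dvd hdl

theorem ncard_Ffield {d : ℕ} (hd : d ≠ 0) : (Ffield p d).ncard = p ^ d := by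
  classical
  have hp : 1 < p := (Fact.out : p.Prime).one_lt
  set P : Polynomial (ZMod p) := Polynomial.X ^ p ^ d - Polynomial.X
  have hP : P ≠ 0 := FiniteField.X_pow_card_pow_sub_X_ne_zero _ hd hp
  have hroots : Ffield p d = P.rootSet (AlgebraicClosure (ZMod p)) := by
    ext x
    simp [Ffield, Polynomial.mem_rootSet, hP, P, sub_eq_zero]
  rw [hroots, Set.ncard_eq_toFinset_card', Set.toFinset_card,
    Polynomial.card_rootSet_eq_natDegree (galois_poly_separable p _ (dvd_pow_self p hd))
      (IsAlgClosed.splits _),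
    FiniteField.X_pow_card_pow_sub_X_natDegree_eq _ hd hp]

end Frobenius

theorem stmt10_general (p : ℕ) [Fact p.Prime] (n k l : ℕ)
    (hlk : l ∣ k) (hkl : Even (k / l)) (d e : ℕ)
    (hd : d = Nat.gcd n k) (he : e = Nat.gcd n l)
    (hde : Odd (d / e)) :
    {x | x ∈ Ffield p n ∧ Smap p l k x = 0} = Ffield p d ∧
    {x | x ∈ Ffield p n ∧ Smap p l k x = 0}.ncard = p ^ d := by
  have hdn : d ∣ n := hd ▸ Nat.gcd_dvd_left n k
  have hed : e ∣ d := hd ▸ he ▸ Nat.gcd_dvd_gcd_of_dvd_right n hlk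
  have hlr : l * (d / e) ∣ k := hd ▸ he ▸ Nat.mul_div_gcd_gcd_dvd hlk
  have hdl : d ∣ l * (d / e) := by
    nth_rw 1 [← Nat.mul_div_cancel' hed]
    exact Nat.mul_dvd_mul_right (he ▸ Nat.gcd_dvd_right n l) _
  have hset : {x | x ∈ Ffield p n ∧ Smap p l k x = 0} = Ffield p d := by
    ext x
    constructor
    · rintro ⟨hxn, hS⟩
      have hxk := mem_Ffield_of_Smap_eq_zero p hlk hkl hS
      rw [mem_Ffield_iff_isPeriodicPt] at hxn hxk ⊢
      exact hd ▸ hxn.gcd hxk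
    · intro hxd
      refine ⟨?_, Smap_eq_zero_of_mem_Ffield p hdl hde (Nat.dvd_div_of_mul_dvd hlr) hkl hxd⟩
      rw [mem_Ffield_iff_isPeriodicPt] at hxd ⊢
      exact hxd.trans_dvd hdn
  have hd0 : d ≠ 0 := fun h => by simp [h] at hde
  exact ⟨hset, hset ▸ ncard_Ffield p hd0⟩

theorem stmt10 (p : ℕ) [Fact p.Prime] (n k l : ℕ) (hn : 0 < n) (hk : 0 < k) (hl : 0 < l)
    (hlk : l ∣ k) (hkl : Even (k / l)) (d e : ℕ)
    (hd : d = Nat.gcd n k) (he : e = Nat.gcd n l)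
    (hde : Odd (d / e)) :
    {x | x ∈ Ffield p n ∧ Smap p l k x = 0} = Ffield p d ∧
    {x | x ∈ Ffield p n ∧ Smap p l k x = 0}.ncard = p ^ d :=
  stmt10_general p n k l hlk hkl d e hd he hde
end

section
/- Let p be a prime, let n, k, l be positive integers with l | k, set d = gcd(n,k), e = gcd(n,l), L = lcm(d,l), and suppose p does not divide k/L. Let a ∈ 𝔽_{p^n}. Then the equation T_l^k(X) = a has a solution in 𝔽_{p^n} if and only if S_e^{2e}(T_d^n(a)) = 0. Moreover, in that case, for any δ ∈ 𝔽_{p^n} with T_d^n(δ) = 1 and any δ₁ ∈ 𝔽_{p^d} with T_e^d(δ₁) = 1, setting y₀ = Σ_{i=0}^{n/d−2} Σ_{j=i+1}^{n/d−1} δ^{p^{kj}} (S_l^{2l}(a))^{p^{ki}}, the element x₀ = y₀ + (L/k)·(a − T_l^k(y₀))·δ₁ lies in 𝔽_{p^n} and satisfies T_l^k(x₀) = a, where L/k denotes the element (k/L)^{−1} in 𝔽_p. -/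
open Finset

/-!
Write `d = gcd(n, k)`, `e = gcd(n, l)` and `σ = (·) ^ p ^ k`, a generator of
`Gal(𝔽_{p^n}/𝔽_{p^d})`. On `𝔽_{p^d}` the terms of `T_l^k` repeat with period `L/l`, and
reindexing modulo `d/e` turns the step `l` into `e`, so `T_l^k = (k/L) • T_e^d` there. As
`T_d^n` commutes with `T_l^k`, a solution `x` gives `T_d^n a = (k/L) T_e^d (T_d^n x) ∈ 𝔽_{p^e}`,
which is the condition `S_e^{2e}(T_d^n a) = T_d^n a - (T_d^n a)^{p^e} = 0`.

Conversely `c = S_l^{2l}(a) = a - a^{p^l}` has `T_d^n c = 0`, and `y₀` is the explicit solution of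
`σ y₀ = y₀ - c` given by additive Hilbert 90. Then `a - T_l^k y₀` lies in `𝔽_{p^l}`, over which
`T_l^k` is linear, and `T_l^k δ₁ = k/L` shows that adding `(L/k)(a - T_l^k y₀) δ₁` to `y₀` gives a
solution. Elements of trace one exist because `T_d^n` is a nonzero polynomial of degree `< p^n`.
-/

theorem Nat.gcd_gcd_eq_of_dvd {n k l : ℕ} (h : l ∣ k) : (n.gcd k).gcd l = n.gcd l := by
  rw [Nat.gcd_assoc, Nat.gcd_eq_right h]

theorem sum_range_natCast_eq_sum_zmod {M : Type*} [AddCommMonoid M] (N : ℕ) [NeZero N]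
    (h : ZMod N → M) : ∑ i ∈ range N, h i = ∑ z : ZMod N, h z :=
  sum_nbij' (fun i : ℕ => (i : ZMod N)) ZMod.val (by simp) (by simp [ZMod.val_lt])
    (fun i hi => ZMod.val_cast_of_lt (mem_range.1 hi)) (fun z _ => ZMod.natCast_zmod_val z)
    fun _ _ => rfl

namespace Function.Periodic

variable {M : Type*} [AddCommMonoid M] {f : ℕ → M} {n : ℕ}

theorem sum_range_mul (hf : Periodic f n) (q : ℕ) :
    ∑ i ∈ range (q * n), f i = q • ∑ i ∈ range n, f i := by
  induction q with
  | zero => simp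
  | succ q ih =>
    rw [Nat.succ_mul, sum_range_add, ih, succ_nsmul]
    congr 1
    exact sum_congr rfl fun i _ => by rw [add_comm]; exact hf.nat_mul q i

theorem sum_range_mul_gcd (hf : Periodic f n) (u : ℕ) :
    ∑ i ∈ range (n / n.gcd u), f (u * i) = ∑ i ∈ range (n / n.gcd u), f (n.gcd u * i) := by
  set g := n.gcd u
  set N := n / g
  rcases Nat.eq_zero_or_pos N with hN | hN
  · simp [hN]
  have : NeZero N := ⟨hN.ne'⟩
  have hgN : g * N = n := Nat.mul_div_cancel' (Nat.gcd_dvd_left n u)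
  have hg : 0 < g := Nat.gcd_pos_of_pos_left u (Nat.pos_of_div_pos hN)
  set u' := u / g
  have hu' : g * u' = u := Nat.mul_div_cancel' (Nat.gcd_dvd_right n u)
  have hcop : Nat.Coprime u' N := (Nat.coprime_div_gcd_div_gcd hg).symm
  set h : ZMod N → M := fun z => f (g * z.val)
  have hfh : ∀ m, f (g * m) = h m := fun m => by
    have e : g * m = g * (m % N) + m / N * n := by
      rw [← hgN]; nth_rewrite 1 [← Nat.mod_add_div m N]; ring
    simp only [h, ZMod.val_natCast, e]
    exact hf.nat_mul _ _
  calc ∑ i ∈ range N, f (u * i)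
      = ∑ z : ZMod N, h (ZMod.unitOfCoprime u' hcop * z) := by
        rw [← sum_range_natCast_eq_sum_zmod]
        refine sum_congr rfl fun i _ => ?_
        rw [← hu', mul_assoc, hfh, ZMod.coe_unitOfCoprime, Nat.cast_mul]
    _ = ∑ z : ZMod N, h z := (Units.mulLeft_bijective _).sum_comp h
    _ = ∑ i ∈ range N, f (g * i) := by
        rw [← sum_range_natCast_eq_sum_zmod]
        exact sum_congr rfl fun i _ => (hfh i).symm

end Function.Periodic

theorem sum_mul_sum_range_succ {R : Type*} [CommRing R] (g c : ℕ → R) (m : ℕ) :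
    ∑ j ∈ range m, g (j + 1) * ∑ i ∈ range j, c (i + 1) =
      ∑ j ∈ range m, g j * ∑ i ∈ range j, c i + g m * ∑ i ∈ range m, c i
        - c 0 * ∑ j ∈ range m, g (j + 1) := by
  have hc : ∀ j, ∑ i ∈ range j, c (i + 1) = ∑ i ∈ range (j + 1), c i - c 0 := fun j => by
    rw [sum_range_succ']; ring
  have hg := sum_range_succ' (fun j => g j * ∑ i ∈ range j, c i) m
  rw [sum_range_succ] at hg
  simp only [hc, mul_sub, sum_sub_distrib, mul_sum (s := range m) (a := c 0)]
  simp only [range_zero, sum_empty, mul_zero, add_zero] at hg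
  rw [hg]; simp only [mul_comm]

theorem pow_pow_mul_eq_self {M : Type*} [Monoid M] {x : M} {p d : ℕ} (hx : x ^ p ^ d = x)
    (i : ℕ) : x ^ p ^ (d * i) = x := by
  induction i with
  | zero => simp
  | succ i ih => rw [mul_add_one, pow_add, pow_mul, ih, hx]

theorem pow_pow_pow {M : Type*} [Monoid M] (x : M) (p a b : ℕ) :
    (x ^ p ^ a) ^ p ^ b = x ^ p ^ (a + b) := by
  rw [← pow_mul, ← pow_add]

open Polynomial in
theorem exists_pow_pow_eq_self_eval_ne_zero {F : Type*} [Field F] [IsAlgClosed F] (p : ℕ)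
    [Fact p.Prime] [CharP F p] {n : ℕ} (hn : n ≠ 0) {P : F[X]} (hP : P ≠ 0)
    (hdeg : P.natDegree < p ^ n) : ∃ z : F, z ^ p ^ n = z ∧ P.eval z ≠ 0 := by
  classical
  by_contra! h
  have hp : 1 < p := (Fact.out : p.Prime).one_lt
  have hf : (X ^ p ^ n - X : F[X]).roots.toFinset ⊆ P.roots.toFinset := fun z hz => by
    simp_all [sub_eq_zero]
  have hsep := nodup_roots
    (galois_poly_separable p (p ^ n) (dvd_pow_self p hn) : (X ^ p ^ n - X : F[X]).Separable)
  have hcard := (IsAlgClosed.splits (X ^ p ^ n - X : F[X])).natDegree_eq_card_roots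
  rw [FiniteField.X_pow_card_pow_sub_X_natDegree_eq F hn hp] at hcard
  have := (card_le_card hf).trans (Multiset.toFinset_card_le _)
  rw [Multiset.toFinset_card_of_nodup hsep, ← hcard] at this
  exact (this.trans (card_roots' P)).not_gt hdeg

def hilbert90Witness {R : Type*} [CommRing R] (p k m : ℕ) (δ c : R) : R :=
  ∑ i ∈ range (m - 1), ∑ j ∈ Ico (i + 1) m, δ ^ p ^ (k * j) * c ^ p ^ (k * i)

-- With `σ = (·) ^ p ^ k` the witness is `∑ j < m, σʲ δ * ∑ i < j, σⁱ c`; `σ` shifts both indices.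
theorem additive_hilbert90 {R : Type*} [CommRing R] {p : ℕ} [ExpChar R p] {k m : ℕ} {δ c : R}
    (hδ : δ ^ p ^ (k * m) = δ) (hδT : ∑ j ∈ range m, δ ^ p ^ (k * j) = 1)
    (hcT : ∑ i ∈ range m, c ^ p ^ (k * i) = 0) :
    hilbert90Witness p k m δ c ^ p ^ k = hilbert90Witness p k m δ c - c := by
  set g : ℕ → R := fun j => δ ^ p ^ (k * j)
  set c' : ℕ → R := fun i => c ^ p ^ (k * i)
  have hshift : ∀ (x : R) j, (x ^ p ^ (k * j)) ^ p ^ k = x ^ p ^ (k * (j + 1)) := fun x j => by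
    rw [pow_pow_pow, mul_add_one]
  have hgs : ∀ j, g j ^ p ^ k = g (j + 1) := fun j => hshift δ j
  have hcs : ∀ i, c' i ^ p ^ k = c' (i + 1) := fun i => hshift c i
  have hgT : ∑ j ∈ range m, g (j + 1) = 1 := by
    have := sum_range_succ' g m
    rw [sum_range_succ, hδT, show g m = g 0 by simpa [g] using hδ] at this
    exact add_right_cancel this.symm
  have hW : hilbert90Witness p k m δ c = ∑ j ∈ range m, g j * ∑ i ∈ range j, c' i := by
    rw [hilbert90Witness, sum_subset (range_subset_range.2 (Nat.sub_le m 1)) fun i hi hi' => ?_,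
      range_eq_Ico, sum_Ico_Ico_comm']
    · simp only [g, c', mul_sum, range_eq_Ico]
    · rw [show i + 1 = m by grind, Ico_self, sum_empty]
  rw [hW, sum_pow_char_pow]
  simp only [mul_pow, sum_pow_char_pow, hgs, hcs]
  rw [sum_mul_sum_range_succ, hcT, hgT]
  simp [c']

noncomputable def Ffield.subfield (p : ℕ) [Fact p.Prime] (m : ℕ) :
    Subfield (AlgebraicClosure (ZMod p)) :=
  (iterateFrobenius (AlgebraicClosure (ZMod p)) p m).eqLocusField (RingHom.id _)

section Frobenius

variable {p : ℕ} [Fact p.Prime]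

local notation "K" => AlgebraicClosure (ZMod p)

namespace Ffield

theorem mem_subfield {m : ℕ} {x : K} : x ∈ subfield p m ↔ x ∈ Ffield p m := Iff.rfl

theorem subfield_mono {d n : ℕ} (h : d ∣ n) : subfield p d ≤ subfield p n := by
  obtain ⟨i, rfl⟩ := h
  exact fun x hx => pow_pow_mul_eq_self hx i

end Ffield

theorem Tmap_add (u v : ℕ) (x y : K) : Tmap p u v (x + y) = Tmap p u v x + Tmap p u v y := by
  simp only [Tmap, add_pow_char_pow, sum_add_distrib]

theorem Tmap_sub (u v : ℕ) (x y : K) : Tmap p u v (x - y) = Tmap p u v x - Tmap p u v y := by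
  simp only [Tmap, sub_pow_char_pow, sum_sub_distrib]

theorem Tmap_mul_of_mem {u v : ℕ} {c : K} (hc : c ∈ Ffield p u) (x : K) :
    Tmap p u v (c * x) = c * Tmap p u v x := by
  simp only [Tmap, mul_pow, pow_pow_mul_eq_self hc, mul_sum]

theorem Tmap_pow_char_pow (u v s : ℕ) (x : K) :
    Tmap p u v x ^ p ^ s = Tmap p u v (x ^ p ^ s) := by
  simp only [Tmap, sum_pow_char_pow, pow_pow_pow, add_comm]

theorem Tmap_comm (u v u' v' : ℕ) (x : K) :
    Tmap p u v (Tmap p u' v' x) = Tmap p u' v' (Tmap p u v x) := by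
  simp only [Tmap, sum_pow_char_pow, pow_pow_pow]
  rw [sum_comm]
  simp only [add_comm]

theorem Tmap_pow_sub {u v : ℕ} (huv : u ∣ v) (x : K) :
    Tmap p u v x ^ p ^ u - Tmap p u v x = x ^ p ^ v - x := by
  simp only [Tmap, sum_pow_char_pow, pow_pow_pow, ← sum_sub_distrib, ← mul_add_one]
  rw [sum_range_sub (fun i => x ^ p ^ (u * i)), Nat.mul_div_cancel' huv]
  simp

theorem Tmap_mem {u v : ℕ} (huv : u ∣ v) {x : K} (hx : x ∈ Ffield p v) :
    Tmap p u v x ∈ Ffield p u := by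
  have := Tmap_pow_sub huv x
  rwa [show x ^ p ^ v = x from hx, sub_self, sub_eq_zero] at this

theorem Tmap_mem_of_mem (S : Subfield K) (u v : ℕ) {x : K} (hx : x ∈ S) : Tmap p u v x ∈ S :=
  sum_mem fun _ _ => pow_mem hx _

theorem Smap_two_mul {u : ℕ} (hu : 0 < u) (x : K) : Smap p u (2 * u) x = x - x ^ p ^ u := by
  simp [Smap, Nat.mul_div_cancel _ hu, sum_range_succ, sub_eq_add_neg]

theorem Smap_two_mul_eq_zero_iff {u : ℕ} (hu : 0 < u) {x : K} :
    Smap p u (2 * u) x = 0 ↔ x ∈ Ffield p u := by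
  rw [Smap_two_mul hu, sub_eq_zero, eq_comm]; rfl

theorem sum_range_pow_gcd {n : ℕ} {x : K} (hx : x ∈ Ffield p n) (u : ℕ) :
    ∑ i ∈ range (n / n.gcd u), x ^ p ^ (u * i) = Tmap p (n.gcd u) n x := by
  have hper : Function.Periodic (fun i => x ^ p ^ i) n := fun i => by
    show x ^ p ^ (i + n) = x ^ p ^ i
    rw [add_comm, ← pow_pow_pow, show x ^ p ^ n = x from hx]
  exact hper.sum_range_mul_gcd u

theorem Tmap_eq_natCast_mul {d l k : ℕ} (hl : 0 < l) (hk : d.lcm l ∣ k) {w : K}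
    (hw : w ∈ Ffield p d) :
    Tmap p l k w = ((k / d.lcm l : ℕ) : K) * Tmap p (d.gcd l) d w := by
  have hlL : l * (d.lcm l / l) = d.lcm l := Nat.mul_div_cancel' (Nat.dvd_lcm_right d l)
  have hwL : w ^ p ^ d.lcm l = w := Ffield.subfield_mono (Nat.dvd_lcm_left d l) hw
  have hper : Function.Periodic (fun i => w ^ p ^ (l * i)) (d.lcm l / l) := fun i => by
    show w ^ p ^ (l * (i + d.lcm l / l)) = w ^ p ^ (l * i)
    rw [mul_add, hlL, add_comm, ← pow_pow_pow, hwL]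
  have hLl : d.lcm l / l = d / d.gcd l := by
    rw [Nat.lcm, Nat.mul_div_right_comm (Nat.gcd_dvd_left d l), Nat.mul_div_cancel _ hl]
  rw [Tmap, ← Nat.div_mul_div hk (Nat.dvd_lcm_right d l), hper.sum_range_mul, hLl,
    sum_range_pow_gcd hw, nsmul_eq_mul]

open Polynomial in
theorem exists_Tmap_eq_one {d n : ℕ} (hd : 0 < d) (hn : 0 < n) (hdn : d ∣ n) :
    ∃ δ ∈ Ffield p n, Tmap p d n δ = 1 := by
  let P : K[X] := ∑ i ∈ range (n / d), X ^ p ^ (d * i)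
  have hP0 : P ≠ 0 := fun h => by
    have := congrArg (coeff · 1) h
    simp [P, coeff_X_pow, eq_comm (a := 1), (Fact.out : p.Prime).ne_one, hd.ne'] at this
    exact (Nat.le_of_dvd hn hdn).not_gt (this hd)
  have hp : 1 < p := (Fact.out : p.Prime).one_lt
  have hPdeg : P.natDegree < p ^ n := calc
    P.natDegree ≤ p ^ (d * (n / d - 1)) := natDegree_sum_le_of_forall_le _ _ fun i hi => by
      rw [natDegree_X_pow]
      exact Nat.pow_le_pow_right hp.pos (Nat.mul_le_mul_left d (by grind))
    _ < p ^ n := Nat.pow_lt_pow_right hp (by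
      have := Nat.mul_div_cancel' hdn
      have := Nat.div_pos (Nat.le_of_dvd hn hdn) hd
      rw [Nat.mul_sub_one]; omega)
  obtain ⟨z, hz, hPz⟩ := exists_pow_pow_eq_self_eval_ne_zero p hn.ne' hP0 hPdeg
  have hTz : P.eval z = Tmap p d n z := by simp [P, eval_finsetSum, Tmap]
  rw [hTz] at hPz
  have hTzF : (Tmap p d n z)⁻¹ ∈ Ffield.subfield p d := inv_mem (Tmap_mem hdn hz)
  refine ⟨(Tmap p d n z)⁻¹ * z, mul_mem (Ffield.subfield_mono hdn hTzF) hz, ?_⟩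
  rw [Tmap_mul_of_mem hTzF, inv_mul_cancel₀ hPz]

theorem Tmap_gcd_mem_of_mem {n k l : ℕ} (hl : 0 < l) (hlk : l ∣ k) {x : K}
    (hx : x ∈ Ffield p n) : Tmap p (n.gcd k) n (Tmap p l k x) ∈ Ffield p (n.gcd l) := by
  have hTx := Tmap_mem (Nat.gcd_dvd_left n k) hx
  rw [Tmap_comm, Tmap_eq_natCast_mul hl (Nat.lcm_dvd (Nat.gcd_dvd_right n k) hlk) hTx,
    Nat.gcd_gcd_eq_of_dvd hlk]
  exact Ffield.mem_subfield.1 (mul_mem (natCast_mem _ _)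
    (Tmap_mem (Nat.gcd_dvd_gcd_of_dvd_right n hlk) hTx))

theorem pow_hilbert90Witness {n k : ℕ} {δ c : K} (hδ : δ ∈ Ffield p n)
    (hδT : Tmap p (n.gcd k) n δ = 1) (hc : c ∈ Ffield p n) (hcT : Tmap p (n.gcd k) n c = 0) :
    hilbert90Witness p k (n / n.gcd k) δ c ^ p ^ k =
      hilbert90Witness p k (n / n.gcd k) δ c - c := by
  refine additive_hilbert90 ?_ ((sum_range_pow_gcd hδ k).trans hδT)
    ((sum_range_pow_gcd hc k).trans hcT)
  set d := n.gcd k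
  obtain ⟨k', hk'⟩ : d ∣ k := Nat.gcd_dvd_right n k
  rw [hk', mul_right_comm, Nat.mul_div_cancel' (Nat.gcd_dvd_left n k)]
  exact pow_pow_mul_eq_self hδ k'

theorem sub_Tmap_mem_of_pow_eq {l k : ℕ} (hlk : l ∣ k) {a y : K}
    (hy : y ^ p ^ k = y - (a - a ^ p ^ l)) : a - Tmap p l k y ∈ Ffield p l := by
  have := Tmap_pow_sub hlk y
  show (a - Tmap p l k y) ^ p ^ l = a - Tmap p l k y
  rw [sub_pow_char_pow]
  linear_combination -this - hy

theorem Tmap_solution {n k l : ℕ} (hl : 0 < l) (hlk : l ∣ k)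
    (hpk : ¬ p ∣ k / (n.gcd k).lcm l) {a : K} (ha : a ∈ Ffield p n)
    (hA : Tmap p (n.gcd k) n a ∈ Ffield p l) {δ : K} (hδ : δ ∈ Ffield p n)
    (hδT : Tmap p (n.gcd k) n δ = 1) {δ₁ : K} (hδ₁ : δ₁ ∈ Ffield p (n.gcd k))
    (hδ₁T : Tmap p (n.gcd l) (n.gcd k) δ₁ = 1) {y₀ : K}
    (hy₀ : y₀ = hilbert90Witness p k (n / n.gcd k) δ (Smap p l (2 * l) a)) {x₀ : K}
    (hx₀ : x₀ = y₀ + ((k / (n.gcd k).lcm l : ℕ) : K)⁻¹ * (a - Tmap p l k y₀) * δ₁) :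
    x₀ ∈ Ffield p n ∧ Tmap p l k x₀ = a := by
  set L := (n.gcd k).lcm l
  rw [Smap_two_mul hl a] at hy₀
  have hcF : a - a ^ p ^ l ∈ Ffield.subfield p n := sub_mem ha (pow_mem ha _)
  have hcT : Tmap p (n.gcd k) n (a - a ^ p ^ l) = 0 := by
    rw [Tmap_sub, ← Tmap_pow_char_pow, show _ = _ from hA, sub_self]
  have hyF : y₀ ∈ Ffield.subfield p n := by
    rw [hy₀]
    exact sum_mem fun _ _ => sum_mem fun _ _ => mul_mem (pow_mem hδ _) (pow_mem hcF _)
  have hb : a - Tmap p l k y₀ ∈ Ffield p l := by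
    refine sub_Tmap_mem_of_pow_eq hlk ?_
    rw [hy₀]
    exact pow_hilbert90Witness hδ hδT hcF hcT
  have hkL : ((k / L : ℕ) : K) ≠ 0 := by rwa [Ne, CharP.cast_eq_zero_iff K p]
  have ht : ∀ m, ((k / L : ℕ) : K)⁻¹ ∈ Ffield.subfield p m := fun _ => inv_mem (natCast_mem _ _)
  have hT1 : Tmap p l k δ₁ = (k / L : ℕ) := by
    rw [Tmap_eq_natCast_mul hl (Nat.lcm_dvd (Nat.gcd_dvd_right n k) hlk) hδ₁,
      Nat.gcd_gcd_eq_of_dvd hlk, hδ₁T, mul_one]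
  have hT2 : Tmap p l k (((k / L : ℕ) : K)⁻¹ * (a - Tmap p l k y₀) * δ₁) =
      a - Tmap p l k y₀ := by
    rw [mul_assoc, Tmap_mul_of_mem (ht l), Tmap_mul_of_mem hb, hT1, mul_comm,
      mul_inv_cancel_right₀ hkL]
  have hbF : a - Tmap p l k y₀ ∈ Ffield.subfield p n := sub_mem ha (Tmap_mem_of_mem _ _ _ hyF)
  refine ⟨hx₀ ▸ add_mem hyF (mul_mem (mul_mem (ht n) hbF)
    (Ffield.subfield_mono (Nat.gcd_dvd_left n k) hδ₁)), ?_⟩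
  rw [hx₀, Tmap_add, hT2, add_sub_cancel]

end Frobenius

theorem stmt14_general (p : ℕ) [Fact p.Prime] (n k l : ℕ) (hn : 0 < n) (hl : 0 < l)
    (hlk : l ∣ k) (d e L : ℕ)
    (hd : d = Nat.gcd n k) (he : e = Nat.gcd n l) (hL : L = Nat.lcm d l)
    (hpk : ¬ p ∣ k / L) (a : AlgebraicClosure (ZMod p)) (ha : a ∈ Ffield p n) :
    ((∃ x ∈ Ffield p n, Tmap p l k x = a) ↔ Smap p e (2 * e) (Tmap p d n a) = 0) ∧
    (Smap p e (2 * e) (Tmap p d n a) = 0 →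
      ∀ δ ∈ Ffield p n, Tmap p d n δ = 1 →
      ∀ δ₁ ∈ Ffield p d, Tmap p e d δ₁ = 1 →
      ∀ y₀, y₀ = ∑ i ∈ Finset.range (n / d - 1), ∑ j ∈ Finset.Ico (i + 1) (n / d),
          δ ^ p ^ (k * j) * (Smap p l (2 * l) a) ^ p ^ (k * i) →
      ∀ x₀, x₀ = y₀ + (((k / L : ℕ) : AlgebraicClosure (ZMod p)))⁻¹ *
          (a - Tmap p l k y₀) * δ₁ →
        x₀ ∈ Ffield p n ∧ Tmap p l k x₀ = a) := by
  subst hd he hL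
  have hd0 : 0 < n.gcd k := Nat.gcd_pos_of_pos_left k hn
  have he0 : 0 < n.gcd l := Nat.gcd_pos_of_pos_left l hn
  have hS : Smap p (n.gcd l) (2 * n.gcd l) (Tmap p (n.gcd k) n a) = 0 ↔
      Tmap p (n.gcd k) n a ∈ Ffield p (n.gcd l) := Smap_two_mul_eq_zero_iff he0
  have hA := fun hS' => Ffield.subfield_mono (p := p) (Nat.gcd_dvd_right n l) (hS.1 hS')
  refine ⟨⟨?_, fun hS' => ?_⟩, fun hS' δ hδ hδT δ₁ hδ₁ hδ₁T y₀ hy₀ x₀ hx₀ =>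
    Tmap_solution hl hlk hpk ha (hA hS') hδ hδT hδ₁ hδ₁T hy₀ hx₀⟩
  · rintro ⟨x, hx, rfl⟩
    exact hS.2 (Tmap_gcd_mem_of_mem hl hlk hx)
  · obtain ⟨δ, hδ, hδT⟩ := exists_Tmap_eq_one (p := p) hd0 hn (Nat.gcd_dvd_left n k)
    obtain ⟨δ₁, hδ₁, hδ₁T⟩ :=
      exists_Tmap_eq_one (p := p) he0 hd0 (Nat.gcd_dvd_gcd_of_dvd_right n hlk)
    exact ⟨_, Tmap_solution hl hlk hpk ha (hA hS') hδ hδT hδ₁ hδ₁T rfl rfl⟩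

theorem stmt14 (p : ℕ) [Fact p.Prime] (n k l : ℕ) (hn : 0 < n) (hk : 0 < k) (hl : 0 < l)
    (hlk : l ∣ k) (d e L : ℕ)
    (hd : d = Nat.gcd n k) (he : e = Nat.gcd n l) (hL : L = Nat.lcm d l)
    (hpk : ¬ p ∣ k / L) (a : AlgebraicClosure (ZMod p)) (ha : a ∈ Ffield p n) :
    ((∃ x ∈ Ffield p n, Tmap p l k x = a) ↔ Smap p e (2 * e) (Tmap p d n a) = 0) ∧
    (Smap p e (2 * e) (Tmap p d n a) = 0 →
      ∀ δ ∈ Ffield p n, Tmap p d n δ = 1 →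
      ∀ δ₁ ∈ Ffield p d, Tmap p e d δ₁ = 1 →
      ∀ y₀, y₀ = ∑ i ∈ Finset.range (n / d - 1), ∑ j ∈ Finset.Ico (i + 1) (n / d),
          δ ^ p ^ (k * j) * (Smap p l (2 * l) a) ^ p ^ (k * i) →
      ∀ x₀, x₀ = y₀ + (((k / L : ℕ) : AlgebraicClosure (ZMod p)))⁻¹ *
          (a - Tmap p l k y₀) * δ₁ →
        x₀ ∈ Ffield p n ∧ Tmap p l k x₀ = a) :=
  stmt14_general p n k l hn hl hlk d e L hd he hL hpk a ha
end
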